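/- arXiv:1106.2424 — 2 statements merged into one kernel-verified Lean document; each statement's English description precedes it below -/
import Mathlib

section
/- Let (W,S) be a Coxeter system and let r, s, t ∈ S be simple reflections such that the orders of rs, rt and st are all greater than 2 (possibly infinite). Then there is no element w in W for which there exist w₁, w₂ ∈ W with w = w₁ r = w₂ s t and l(w) = l(w₁) + 1 = l(w₂) + 2. -/
/-!
Write `D(w)` for the set of right descents of `w`. Two dihedral facts drive the proof: if `a ≠ b`
lie in `D(w)` then `a ∈ D(w b)`, and if moreover `(s_b s_a)² ≠ 1` then `a ∈ D(w a b)`. Both come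
from the exchange property, obtained from Tits' action of `W` on `W × ZMod 2`, whose second
coordinate records the parity of the number of occurrences of a reflection in the right inversion
sequence of any word for `w`.

Now suppose `a, b ∈ D(w)` and `c ∈ D(w b)`, with `(s_x s_y)² ≠ 1` for all three pairs. Then
`v = w b a` satisfies `b, c ∈ D(v)` and `a ∈ D(v c)`: the same configuration with `(a, b, c)`
rotated and `ℓ v = ℓ w - 2`, which is impossible by induction on the length. The theorem is the
case `w = w₁ r = w₂ s t`, where `r, t ∈ D(w)` and `s ∈ D(w t)`.
-/

namespace CoxeterSystem

open List

variable {B W : Type*} [Group W] {M : CoxeterMatrix B} (cs : CoxeterSystem M W)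

local prefix:100 "s " => cs.simple
local prefix:100 "π " => cs.wordProd
local prefix:100 "ℓ " => cs.length
local prefix:100 "ris " => cs.rightInvSeq

theorem rightInvSeq_alternatingWord (i j : B) (n : ℕ) :
    ris (alternatingWord i j n) = ((range n).map fun k ↦ s j * (s i * s j) ^ k).reverse := by
  induction n generalizing i j with
  | zero => rfl
  | succ n ih =>
    rw [alternatingWord_succ, rightInvSeq_concat, ih, range_succ_eq_map, map_cons, map_map,
      reverse_cons, concat_eq_append, map_reverse, map_map, pow_zero, mul_one]
    congr 3
    funext k
    simp only [Function.comp_apply, MulAut.conj_apply, inv_simple]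
    rw [← mul_pow_mul, pow_succ]
    simp only [mul_assoc]

section ReflectionRepresentation

variable [DecidableEq W]

theorem even_count_rightInvSeq_alternatingWord_two_mul (i j : B) (t : W) :
    Even ((ris (alternatingWord i j (2 * M i j))).count t) := by
  have hperiod :
      (fun k ↦ s j * (s i * s j) ^ k) ∘ (M i j + ·) = fun k ↦ s j * (s i * s j) ^ k := by
    funext k
    simp [pow_add, simple_mul_simple_pow]
  rw [rightInvSeq_alternatingWord, count_reverse, two_mul, range_add, map_append, map_map,
    hperiod, count_append]
  exact Even.add_self _

def reflectionPerm (i : B) : Equiv.Perm (W × ZMod 2) :=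
  Function.Involutive.toPerm (fun x ↦ (s i * x.1 * s i, x.2 + if x.1 = s i then 1 else 0)) <| by
    rintro ⟨t, ε⟩
    have hconj : s i * t * s i = s i ↔ t = s i := by
      constructor
      · intro h
        simpa [mul_assoc] using congrArg (s i * · * s i) h
      · rintro rfl
        simp [simple_mul_simple_self]
    refine Prod.ext ?_ ?_
    · simp [mul_assoc, simple_mul_simple_cancel_left]
    · simp only [hconj]
      split_ifs <;> simp [add_assoc, CharTwo.add_self_eq_zero]

theorem reflectionPerm_apply (i : B) (t : W) (ε : ZMod 2) :
    cs.reflectionPerm i (t, ε) = (s i * t * s i, ε + if t = s i then 1 else 0) := rfl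

theorem prod_map_reflectionPerm_apply (ω : List B) (t : W) (ε : ZMod 2) :
    (ω.map cs.reflectionPerm).prod (t, ε) = (π ω * t * (π ω)⁻¹, ε + (ris ω).count t) := by
  induction ω generalizing t ε with
  | nil => simp
  | cons i ω ih =>
    have hmem : π ω * t * (π ω)⁻¹ = s i ↔ (π ω)⁻¹ * s i * π ω = t := by
      constructor <;> intro h <;> rw [← h] <;> group
    simp only [map_cons, prod_cons, Equiv.Perm.mul_apply, ih, reflectionPerm_apply, hmem,
      rightInvSeq, count_cons, wordProd_cons, mul_inv_rev, inv_simple, beq_iff_eq]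
    refine Prod.ext (by group) ?_
    split_ifs <;> simp [add_assoc]

theorem isLiftable_reflectionPerm : M.IsLiftable cs.reflectionPerm := by
  intro i j
  have hpow : ∀ m : ℕ, (cs.reflectionPerm i * cs.reflectionPerm j) ^ m =
      ((alternatingWord i j (2 * m)).map cs.reflectionPerm).prod := by
    intro m
    induction m with
    | zero => rfl
    | succ m ih =>
      rw [pow_succ', ih, Nat.mul_succ, alternatingWord_succ', alternatingWord_succ']
      simp [mul_assoc]
  ext ⟨t, ε⟩ : 1
  rw [hpow, prod_map_reflectionPerm_apply,
    (cs.even_count_rightInvSeq_alternatingWord_two_mul i j t).natCast_zmod_two,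
    prod_alternatingWord_eq_mul_pow]
  simp [simple_mul_simple_pow]

def reflectionRep : W →* Equiv.Perm (W × ZMod 2) := cs.lift ⟨_, cs.isLiftable_reflectionPerm⟩

theorem reflectionRep_wordProd (ω : List B) :
    cs.reflectionRep (π ω) = (ω.map cs.reflectionPerm).prod := by
  rw [reflectionRep, wordProd, map_list_prod, map_map]
  congr 2
  funext i
  exact cs.lift_apply_simple _ i

theorem count_rightInvSeq_congr {ω ω' : List B} (h : π ω = π ω') (t : W) :
    ((ris ω).count t : ZMod 2) = (ris ω').count t := by
  have := congrArg (fun w ↦ (cs.reflectionRep w (t, 0)).2) h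
  simpa [reflectionRep_wordProd, prod_map_reflectionPerm_apply] using this

end ReflectionRepresentation

theorem exists_isReduced_concat_eq_of_isRightDescent {w : W} {i : B}
    (hi : cs.IsRightDescent w i) :
    ∃ μ : List B, cs.IsReduced (μ.concat i) ∧ π (μ.concat i) = w := by
  obtain ⟨μ, hμ, hμw⟩ := cs.exists_isReduced (w * s i)
  have hπ : π (μ.concat i) = w := by rw [wordProd_concat, ← hμw, simple_mul_simple_cancel_right]
  refine ⟨μ, ?_, hπ⟩
  have := cs.length_mul_simple w i
  rw [IsReduced, hπ, length_concat, ← hμ.eq, ← hμw]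
  unfold IsRightDescent at hi
  omega

theorem simple_mem_rightInvSeq_of_isRightDescent {ω : List B} {i : B}
    (hi : cs.IsRightDescent (π ω) i) : s i ∈ ris ω := by
  classical
  -- `s i` occurs exactly once in the inversion sequence of a reduced word ending in `i`, and the
  -- parity of its number of occurrences does not depend on the word
  obtain ⟨μ, hμ, hμω⟩ := cs.exists_isReduced_concat_eq_of_isRightDescent hi
  have hcount : (ris (μ.concat i)).count (s i) = 1 :=
    count_eq_one_of_mem (hμ.nodup_rightInvSeq cs) (by rw [rightInvSeq_concat]; simp)
  have hodd := cs.count_rightInvSeq_congr hμω (s i)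
  rw [hcount, Nat.cast_one] at hodd
  refine count_pos_iff.mp (Nat.pos_of_ne_zero fun h ↦ ?_)
  simp [h] at hodd

theorem exists_wordProd_mul_simple_eq_eraseIdx {ω : List B} {i : B}
    (hi : cs.IsRightDescent (π ω) i) : ∃ j < ω.length, π ω * s i = π (ω.eraseIdx j) := by
  obtain ⟨j, hj, hji⟩ := mem_iff_getElem.mp (cs.simple_mem_rightInvSeq_of_isRightDescent hi)
  refine ⟨j, by simpa using hj, ?_⟩
  rw [← hji, ← getD_eq_getElem _ 1 hj, wordProd_mul_getD_rightInvSeq]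

theorem length_lt_or_exists_eraseIdx_of_isRightDescent_mul {v : W} {u : List B} {i : B}
    (hi : cs.IsRightDescent (v * π u) i) :
    ℓ (v * π u * s i * (π u)⁻¹) < ℓ v ∨ ∃ j < u.length, v * π u * s i = v * π (u.eraseIdx j) := by
  obtain ⟨μ, hμ, rfl⟩ := cs.exists_isReduced v
  rw [← wordProd_append] at hi ⊢
  obtain ⟨j, hj, hji⟩ := cs.exists_wordProd_mul_simple_eq_eraseIdx hi
  rw [hji]
  rcases lt_or_ge j μ.length with hjμ | hjμ
  · left
    rw [eraseIdx_append_of_lt_length hjμ, wordProd_append, mul_inv_cancel_right, hμ.eq]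
    have := length_eraseIdx_add_one hjμ
    have := cs.length_wordProd_le (μ.eraseIdx j)
    omega
  · right
    refine ⟨j - μ.length, by simp at hj; omega, ?_⟩
    rw [eraseIdx_append_of_length_le hjμ, wordProd_append]

theorem isRightDescent_mul_simple_of_isRightDescent {w : W} {a b : B} (hab : s a ≠ s b)
    (ha : cs.IsRightDescent w a) (hb : cs.IsRightDescent w b) :
    cs.IsRightDescent (w * s b) a := by
  have hw : w * s a * π [a] = w := by simp [simple_mul_simple_cancel_right]
  rcases cs.length_lt_or_exists_eraseIdx_of_isRightDescent_mul (v := w * s a) (u := [a])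
    (hw ▸ hb) with hlt | ⟨j, hj, hjb⟩
  · rw [hw, wordProd_singleton, inv_simple] at hlt
    rw [isRightDescent_iff] at ha hb
    change ℓ (w * s b * s a) < ℓ (w * s b)
    omega
  · obtain rfl : j = 0 := by simpa using hj
    rw [hw] at hjb
    exact absurd (by simpa using hjb.symm) hab

theorem isRightDescent_mul_simple_mul_simple_of_isRightDescent {w : W} {a b : B}
    (hab : (s b * s a) ^ 2 ≠ 1) (ha : cs.IsRightDescent w a) (hb : cs.IsRightDescent w b) :
    cs.IsRightDescent (w * s a * s b) a := by
  have hne : s a ≠ s b := fun h ↦ hab (by simp [h, simple_mul_simple_self])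
  have hba := cs.isRightDescent_mul_simple_of_isRightDescent hne ha hb
  have hab' := cs.isRightDescent_mul_simple_of_isRightDescent hne.symm hb ha
  have hw : w * s b * s a * π [a, b] = w := by
    simp [wordProd_cons, mul_assoc, simple_mul_simple_cancel_left]
  rcases cs.length_lt_or_exists_eraseIdx_of_isRightDescent_mul (v := w * s b * s a) (u := [a, b])
    (hw ▸ ha) with hlt | ⟨j, hj, hja⟩
  · have hwab : w * s a * (π [a, b])⁻¹ = w * s a * s b * s a := by
      simp [wordProd_cons, mul_assoc]
    rw [hw, hwab] at hlt
    rw [isRightDescent_iff] at ha hb hba hab' ⊢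
    have := cs.length_mul_simple (w * s a * s b) a
    omega
  · rw [hw] at hja
    exfalso
    rcases j with _ | _ | j
    · apply hab
      rw [pow_two, mul_eq_one_iff_eq_inv, mul_inv_rev, inv_simple, inv_simple]
      simpa [mul_assoc, simple_mul_simple_cancel_left] using congrArg (s b * w⁻¹ * ·) hja
    · exact hne (by simpa [mul_assoc, simple_mul_simple_cancel_left] using congrArg (w⁻¹ * ·) hja)
    · simp at hj

theorem not_isRightDescent_mul_simple_of_sq_ne_one {a b c : B} (hab : (s a * s b) ^ 2 ≠ 1)
    (hbc : (s b * s c) ^ 2 ≠ 1) (hca : (s c * s a) ^ 2 ≠ 1) {w : W} (ha : cs.IsRightDescent w a)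
    (hb : cs.IsRightDescent w b) : ¬ cs.IsRightDescent (w * s b) c := by
  induction hw : ℓ w using Nat.strong_induction_on generalizing w a b c with
  | _ n ih =>
  intro hc
  have hne : ∀ {x y : B}, (s x * s y) ^ 2 ≠ 1 → s x ≠ s y := fun h hxy ↦
    h (by simp [hxy, simple_mul_simple_self])
  have hba : cs.IsRightDescent (w * s b) a :=
    cs.isRightDescent_mul_simple_of_isRightDescent (hne hab) ha hb
  refine ih _ ?_ hbc hca hab
    (cs.isRightDescent_mul_simple_mul_simple_of_isRightDescent hab hb ha)
    (cs.isRightDescent_mul_simple_of_isRightDescent (hne hca) hc hba) rfl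
    (cs.isRightDescent_mul_simple_mul_simple_of_isRightDescent hca hba hc)
  unfold IsRightDescent at hb hba
  omega

theorem orderOf_simple_mul_simple_comm (a b : B) : orderOf (s a * s b) = orderOf (s b * s a) := by
  rw [← orderOf_inv, mul_inv_rev, inv_simple, inv_simple]

end CoxeterSystem

theorem sq_ne_one_of_orderOf_eq_zero_or_two_lt {G : Type*} [Monoid G] {x : G}
    (h : orderOf x = 0 ∨ 2 < orderOf x) : x ^ 2 ≠ 1 := by
  intro hx
  have := Nat.le_of_dvd two_pos (orderOf_dvd_of_pow_eq_one hx)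
  have := (isOfFinOrder_iff_pow_eq_one.mpr ⟨2, two_pos, hx⟩).orderOf_pos
  omega

/-- Let `(W, S)` be a Coxeter system and `r, s, t ∈ S` simple reflections such
that the orders of `rs`, `rt`, `st` are all greater than `2` (possibly infinite; in Mathlib
`orderOf x = 0` means infinite order).  Then there is no `w ∈ W` with `w = w₁ r = w₂ s t` and
`l(w) = l(w₁) + 1 = l(w₂) + 2` for some `w₁, w₂ ∈ W`. -/
theorem stmt_4 {B W : Type*} [Group W] {M : CoxeterMatrix B} (cs : CoxeterSystem M W)
    (r s t : B)
    (hrs : orderOf (cs.simple r * cs.simple s) = 0 ∨ 2 < orderOf (cs.simple r * cs.simple s))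
    (hrt : orderOf (cs.simple r * cs.simple t) = 0 ∨ 2 < orderOf (cs.simple r * cs.simple t))
    (hst : orderOf (cs.simple s * cs.simple t) = 0 ∨ 2 < orderOf (cs.simple s * cs.simple t)) :
    ¬ ∃ (w w₁ w₂ : W), w = w₁ * cs.simple r ∧ w = w₂ * cs.simple s * cs.simple t ∧
      cs.length w = cs.length w₁ + 1 ∧ cs.length w = cs.length w₂ + 2 := by
  rintro ⟨w, w₁, w₂, hw₁, hw₂, hl₁, hl₂⟩
  rw [cs.orderOf_simple_mul_simple_comm] at hrs hst
  have hr : cs.IsRightDescent w r := by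
    rw [CoxeterSystem.IsRightDescent, hw₁, cs.simple_mul_simple_cancel_right, ← hw₁]
    omega
  have hwt : w * cs.simple t = w₂ * cs.simple s := by rw [hw₂, cs.simple_mul_simple_cancel_right]
  have ht : cs.IsRightDescent w t := by
    have := cs.length_mul_simple w₂ s
    rw [CoxeterSystem.IsRightDescent, hwt]
    omega
  refine cs.not_isRightDescent_mul_simple_of_sq_ne_one
    (sq_ne_one_of_orderOf_eq_zero_or_two_lt hrt) (sq_ne_one_of_orderOf_eq_zero_or_two_lt hst)
    (sq_ne_one_of_orderOf_eq_zero_or_two_lt hrs) hr ht ?_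
  have := cs.length_mul_simple w t
  rw [CoxeterSystem.IsRightDescent, hwt, cs.simple_mul_simple_cancel_right, ← hwt]
  omega
end

section
/- Let P = W_I be a finite standard parabolic subgroup of W generated by a set I of two simple reflections, and let w, u ∈ P. Then for every v ∈ P the degree of f_{w,u,v} as a polynomial in ξ is at most l(v), and f_{w,u,v} = 0 for every v ∈ W with v ∉ P. -/
/-!
The Hecke algebra `H` of a Coxeter system `(W, S)` over `A = ℤ[q^{1/2}, q^{-1/2}]`.
We model `A` as `LaurentPolynomial ℤ`, with the Laurent variable `T 1` playing the role
of `q^{1/2}` (so `q = T 2`).  The Hecke algebra is axiomatized as an `A`-algebra `H`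
together with an `A`-basis `TT = (T_w)_{w ∈ W}` satisfying the defining relations
`(T_s - q)(T_s + 1) = 0` and `T_w T_u = T_{wu}` whenever `l(wu) = l(w) + l(u)`
(and `T_1 = 1`).
-/

noncomputable section

/-- `q = (q^{1/2})^2` in `A = ℤ[q^{1/2}, q^{-1/2}]`. -/
def heckeQ : LaurentPolynomial ℤ := LaurentPolynomial.T 2

/-- `ξ = q^{1/2} - q^{-1/2}` in `A = ℤ[q^{1/2}, q^{-1/2}]`. -/
def heckeXi : LaurentPolynomial ℤ := LaurentPolynomial.T 1 - LaurentPolynomial.T (-1)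

variable {B W H : Type*} [Group W] [Ring H] [Algebra (LaurentPolynomial ℤ) H]
  {M : CoxeterMatrix B}

/-- The hypothesis that `TT` is the standard basis `(T_w)_{w ∈ W}` of the Hecke algebra `H`
of the Coxeter system `cs`. -/
def IsHeckeBasis (cs : CoxeterSystem M W) (TT : Module.Basis W (LaurentPolynomial ℤ) H) : Prop :=
  TT 1 = 1 ∧
  (∀ i : B, (TT (cs.simple i) - algebraMap (LaurentPolynomial ℤ) H heckeQ) *
    (TT (cs.simple i) + 1) = 0) ∧
  (∀ w u : W, cs.length (w * u) = cs.length w + cs.length u → TT w * TT u = TT (w * u))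

/-- `T̃_w = q^{-l(w)/2} T_w`. -/
def Ttilde (cs : CoxeterSystem M W) (TT : Module.Basis W (LaurentPolynomial ℤ) H) (w : W) : H :=
  (LaurentPolynomial.T (-(cs.length w : ℤ)) : LaurentPolynomial ℤ) • TT w

/-- The structure constants `f_{w,u,v} ∈ A` defined by `T̃_w T̃_u = Σ_v f_{w,u,v} T̃_v`;
equivalently, `f_{w,u,v}` is `q^{l(v)/2}` times the coordinate of `T̃_w T̃_u` at `T_v`. -/
def heckeF (cs : CoxeterSystem M W) (TT : Module.Basis W (LaurentPolynomial ℤ) H) (w u v : W) :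
    LaurentPolynomial ℤ :=
  (LaurentPolynomial.T (cs.length v : ℤ) : LaurentPolynomial ℤ) *
    TT.repr (Ttilde cs TT w * Ttilde cs TT u) v

end

/-!
The structure constants are the coordinates of `T̃_w T̃_u` in the basis `(T̃_x)`. Write
`w = s w'` with `l(w') < l(w)`: left multiplication by `T̃_s` either permutes coordinates or,
when `s` is a left descent, adds `ξ` times the old coordinate (from `T̃_s² = 1 + ξ T̃_s`).
By induction `f_{w,u,v}` is a polynomial in `ξ` of degree at most `l(w)`. The coordinate `τ`
at `1` satisfies `τ(T̃_x T̃_y) = δ_{xy,1}`, so it is a trace, and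
`f_{w,u,v} = τ(T̃_w T̃_u T̃_{v⁻¹}) = f_{v⁻¹,w,u⁻¹}`; this turns the bound `l(w)` into
`l(v⁻¹) = l(v)`.

For the support, the same multiplication rule shows that the span of the `T̃_x` with `x ∈ W_I`
is stable under left multiplication by `T̃_s` for `s ∈ I`, hence by every `T̃_w` with `w ∈ W_I`.
-/

noncomputable section

open LaurentPolynomial

variable {B W H : Type*} [Group W] [Ring H] [Algebra (LaurentPolynomial ℤ) H]
  {M : CoxeterMatrix B} (cs : CoxeterSystem M W) (TT : Module.Basis W (LaurentPolynomial ℤ) H)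

local notation "A" => LaurentPolynomial ℤ
local notation "ξ" => heckeXi

def tildeBasis : Module.Basis W A H :=
  TT.unitsSMul fun w => (isUnit_T (-(cs.length w : ℤ))).unit

theorem tildeBasis_apply (w : W) : tildeBasis cs TT w = Ttilde cs TT w := by
  rw [tildeBasis, Module.Basis.unitsSMul_apply, Units.smul_def, IsUnit.unit_spec, Ttilde]

theorem coord_tildeBasis_Ttilde (v x : W) :
    (tildeBasis cs TT).coord v (Ttilde cs TT x) = Finsupp.single x 1 v := by
  rw [← tildeBasis_apply, Module.Basis.coord_apply, Module.Basis.repr_self]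

theorem heckeF_eq_coord (w u v : W) :
    heckeF cs TT w u v = (tildeBasis cs TT).coord v (Ttilde cs TT w * Ttilde cs TT u) := by
  rw [heckeF, Module.Basis.coord_apply, tildeBasis, Module.Basis.repr_unitsSMul, Units.smul_def,
    smul_eq_mul]
  congr 1
  refine (Units.inv_eq_of_mul_eq_one_right ?_).symm
  rw [IsUnit.unit_spec, ← T_add, neg_add_cancel, T_zero]

theorem CoxeterSystem.simple_mul_eq_iff_eq_simple_mul {b : B} {x v : W} :
    cs.simple b * x = v ↔ x = cs.simple b * v := by
  constructor <;> rintro rfl <;> simp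

namespace IsHeckeBasis

variable {cs TT} (hT : IsHeckeBasis cs TT)
include hT

theorem Ttilde_one : Ttilde cs TT 1 = 1 := by
  rw [Ttilde, hT.1, cs.length_one, Nat.cast_zero, neg_zero, T_zero, one_smul]

theorem Ttilde_mul_Ttilde_of_length_mul {x y : W}
    (h : cs.length (x * y) = cs.length x + cs.length y) :
    Ttilde cs TT x * Ttilde cs TT y = Ttilde cs TT (x * y) := by
  rw [Ttilde, Ttilde, Ttilde, smul_mul_smul_comm, hT.2.2 x y h, ← T_add, h]
  push_cast
  ring_nf

theorem TT_simple_mul_self (b : B) :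
    TT (cs.simple b) * TT (cs.simple b) =
      (heckeQ - 1) • TT (cs.simple b) + heckeQ • (1 : H) := by
  have h := hT.2.1 b
  rw [sub_smul, one_smul, Algebra.smul_def, Algebra.smul_def, mul_one, ← sub_eq_zero, ← h]
  noncomm_ring

theorem Ttilde_simple_mul_self (b : B) :
    Ttilde cs TT (cs.simple b) * Ttilde cs TT (cs.simple b) =
      1 + ξ • Ttilde cs TT (cs.simple b) := by
  have hq : (T (-1) * T (-1) * heckeQ : A) = 1 := by
    rw [heckeQ, ← T_add, ← T_add]; norm_num
  have hq1 : (T (-1) * T (-1) * (heckeQ - 1) : A) = ξ * T (-1) := by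
    rw [mul_sub, hq, heckeXi, sub_mul, ← T_add, ← T_add, mul_one]; norm_num
  simp only [Ttilde, cs.length_simple, Nat.cast_one]
  rw [smul_mul_smul_comm, hT.TT_simple_mul_self, smul_add, smul_smul, smul_smul, hq, hq1,
    one_smul, add_comm, smul_smul]

theorem Ttilde_simple_mul_of_not_isLeftDescent {b : B} {x : W} (h : ¬cs.IsLeftDescent x b) :
    Ttilde cs TT (cs.simple b) * Ttilde cs TT x = Ttilde cs TT (cs.simple b * x) := by
  rw [cs.not_isLeftDescent_iff] at h
  exact hT.Ttilde_mul_Ttilde_of_length_mul (by rw [h, cs.length_simple, add_comm])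

theorem Ttilde_mul_simple_of_not_isRightDescent {b : B} {x : W} (h : ¬cs.IsRightDescent x b) :
    Ttilde cs TT x * Ttilde cs TT (cs.simple b) = Ttilde cs TT (x * cs.simple b) := by
  rw [cs.not_isRightDescent_iff] at h
  exact hT.Ttilde_mul_Ttilde_of_length_mul (by rw [h, cs.length_simple])

theorem Ttilde_simple_mul_of_isLeftDescent {b : B} {x : W} (h : cs.IsLeftDescent x b) :
    Ttilde cs TT (cs.simple b) * Ttilde cs TT x =
      Ttilde cs TT (cs.simple b * x) + ξ • Ttilde cs TT x := by
  have hx : Ttilde cs TT x = Ttilde cs TT (cs.simple b) * Ttilde cs TT (cs.simple b * x) := by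
    rw [hT.Ttilde_simple_mul_of_not_isLeftDescent
      (cs.isLeftDescent_iff_not_isLeftDescent_mul.mp h), cs.simple_mul_simple_cancel_left]
  conv_lhs => rw [hx, ← mul_assoc, hT.Ttilde_simple_mul_self, add_mul, one_mul, smul_mul_assoc,
    ← hx]

theorem Ttilde_mul_simple_of_isRightDescent {b : B} {x : W} (h : cs.IsRightDescent x b) :
    Ttilde cs TT x * Ttilde cs TT (cs.simple b) =
      Ttilde cs TT (x * cs.simple b) + ξ • Ttilde cs TT x := by
  have hx : Ttilde cs TT x = Ttilde cs TT (x * cs.simple b) * Ttilde cs TT (cs.simple b) := by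
    rw [hT.Ttilde_mul_simple_of_not_isRightDescent
      (cs.isRightDescent_iff_not_isRightDescent_mul.mp h), cs.simple_mul_simple_cancel_right]
  conv_lhs => rw [hx, mul_assoc, hT.Ttilde_simple_mul_self, mul_add, mul_one, mul_smul_comm,
    ← hx]

theorem coord_Ttilde_simple_mul_of_not_isLeftDescent {b : B} {v : W}
    (hv : ¬cs.IsLeftDescent v b) (X : H) :
    (tildeBasis cs TT).coord v (Ttilde cs TT (cs.simple b) * X) =
      (tildeBasis cs TT).coord (cs.simple b * v) X := by
  classical
  suffices (tildeBasis cs TT).coord v ∘ₗ LinearMap.mulLeft A (Ttilde cs TT (cs.simple b)) =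
      (tildeBasis cs TT).coord (cs.simple b * v) from LinearMap.congr_fun this X
  refine (tildeBasis cs TT).ext fun x => ?_
  simp only [LinearMap.comp_apply, LinearMap.mulLeft_apply, tildeBasis_apply]
  by_cases hx : cs.IsLeftDescent x b
  · have hxv : x ≠ v := by rintro rfl; exact hv hx
    rw [hT.Ttilde_simple_mul_of_isLeftDescent hx, map_add, map_smul]
    simp only [coord_tildeBasis_Ttilde, Finsupp.single_apply, if_neg hxv, smul_zero, add_zero,
      cs.simple_mul_eq_iff_eq_simple_mul]
  · rw [hT.Ttilde_simple_mul_of_not_isLeftDescent hx]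
    simp only [coord_tildeBasis_Ttilde, Finsupp.single_apply, cs.simple_mul_eq_iff_eq_simple_mul]

theorem coord_Ttilde_simple_mul_of_isLeftDescent {b : B} {v : W}
    (hv : cs.IsLeftDescent v b) (X : H) :
    (tildeBasis cs TT).coord v (Ttilde cs TT (cs.simple b) * X) =
      (tildeBasis cs TT).coord (cs.simple b * v) X + ξ * (tildeBasis cs TT).coord v X := by
  classical
  suffices (tildeBasis cs TT).coord v ∘ₗ LinearMap.mulLeft A (Ttilde cs TT (cs.simple b)) =
      (tildeBasis cs TT).coord (cs.simple b * v) + ξ • (tildeBasis cs TT).coord v from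
    LinearMap.congr_fun this X
  refine (tildeBasis cs TT).ext fun x => ?_
  simp only [LinearMap.comp_apply, LinearMap.mulLeft_apply, LinearMap.add_apply,
    LinearMap.smul_apply, tildeBasis_apply]
  by_cases hx : cs.IsLeftDescent x b
  · rw [hT.Ttilde_simple_mul_of_isLeftDescent hx, map_add, map_smul]
    simp only [coord_tildeBasis_Ttilde, Finsupp.single_apply, cs.simple_mul_eq_iff_eq_simple_mul]
  · have hxv : x ≠ v := by rintro rfl; exact hx hv
    rw [hT.Ttilde_simple_mul_of_not_isLeftDescent hx]
    simp only [coord_tildeBasis_Ttilde, Finsupp.single_apply, if_neg hxv, smul_zero, add_zero,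
      cs.simple_mul_eq_iff_eq_simple_mul]

theorem heckeF_xiDegree_le_length_left (w u v : W) :
    ∃ p : Polynomial ℤ, p.natDegree ≤ cs.length w ∧
      Polynomial.aeval ξ p = heckeF cs TT w u v := by
  classical
  induction hn : cs.length w using Nat.strong_induction_on generalizing w v with
  | _ n ih =>
  rcases eq_or_ne w 1 with rfl | hw
  · refine ⟨if u = v then 1 else 0, by split_ifs <;> simp, ?_⟩
    rw [heckeF_eq_coord, hT.Ttilde_one, one_mul, coord_tildeBasis_Ttilde, Finsupp.single_apply]
    split_ifs <;> simp
  obtain ⟨b, hb⟩ := cs.exists_leftDescent_of_ne_one hw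
  have hlt : cs.length (cs.simple b * w) < n := by
    rw [cs.isLeftDescent_iff] at hb; omega
  have hTw : Ttilde cs TT w = Ttilde cs TT (cs.simple b) * Ttilde cs TT (cs.simple b * w) := by
    rw [hT.Ttilde_simple_mul_of_not_isLeftDescent
      (cs.isLeftDescent_iff_not_isLeftDescent_mul.mp hb), cs.simple_mul_simple_cancel_left]
  rw [heckeF_eq_coord, hTw, mul_assoc]
  obtain ⟨p₁, hp₁, hp₁f⟩ := ih _ hlt (cs.simple b * w) (cs.simple b * v) rfl
  rw [heckeF_eq_coord] at hp₁f
  by_cases hv : cs.IsLeftDescent v b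
  · obtain ⟨p₂, hp₂, hp₂f⟩ := ih _ hlt (cs.simple b * w) v rfl
    rw [heckeF_eq_coord] at hp₂f
    refine ⟨p₁ + Polynomial.X * p₂, ?_, ?_⟩
    · refine (Polynomial.natDegree_add_le _ _).trans (max_le (by omega) ?_)
      refine Polynomial.natDegree_mul_le.trans ?_
      have := Polynomial.natDegree_X_le (R := ℤ)
      omega
    · rw [hT.coord_Ttilde_simple_mul_of_isLeftDescent hv, map_add, map_mul, Polynomial.aeval_X,
        hp₁f, hp₂f]
  · exact ⟨p₁, by omega, by rw [hT.coord_Ttilde_simple_mul_of_not_isLeftDescent hv, hp₁f]⟩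

open Classical in
theorem coord_one_Ttilde_mul_Ttilde (x y : W) :
    (tildeBasis cs TT).coord 1 (Ttilde cs TT x * Ttilde cs TT y) =
      if x * y = 1 then 1 else 0 := by
  induction hn : cs.length y using Nat.strong_induction_on generalizing x y with
  | _ n ih =>
  rcases eq_or_ne y 1 with rfl | hy
  · rw [hT.Ttilde_one, mul_one, mul_one, coord_tildeBasis_Ttilde, Finsupp.single_apply]
  obtain ⟨b, hb⟩ := cs.exists_leftDescent_of_ne_one hy
  rw [cs.isLeftDescent_iff] at hb
  have hlt : cs.length (cs.simple b * y) < n := by omega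
  have hTy : Ttilde cs TT y = Ttilde cs TT (cs.simple b) * Ttilde cs TT (cs.simple b * y) := by
    rw [hT.Ttilde_simple_mul_of_not_isLeftDescent (by
      rw [cs.not_isLeftDescent_iff, cs.simple_mul_simple_cancel_left]; omega),
      cs.simple_mul_simple_cancel_left]
  have hxy : x * cs.simple b * (cs.simple b * y) = x * y := by
    simp [mul_assoc]
  rw [hTy, ← mul_assoc]
  by_cases hx : cs.IsRightDescent x b
  · have hne : ¬x * (cs.simple b * y) = 1 := by
      intro h
      have hyx : cs.simple b * y = x⁻¹ := eq_inv_of_mul_eq_one_right h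
      have hl : cs.length y = cs.length (x * cs.simple b) := by
        rw [← cs.length_inv (x * _), mul_inv_rev, cs.inv_simple, ← hyx,
          cs.simple_mul_simple_cancel_left]
      have hl' : cs.length (cs.simple b * y) = cs.length x := by rw [hyx, cs.length_inv]
      rw [cs.isRightDescent_iff] at hx
      omega
    rw [hT.Ttilde_mul_simple_of_isRightDescent hx, add_mul, smul_mul_assoc, map_add, map_smul,
      ih _ hlt _ _ rfl, ih _ hlt _ _ rfl, hxy, if_neg hne, smul_zero, add_zero]
  · rw [hT.Ttilde_mul_simple_of_not_isRightDescent hx, ih _ hlt _ _ rfl, hxy]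

theorem coord_one_mul_comm (a c : H) :
    (tildeBasis cs TT).coord 1 (a * c) = (tildeBasis cs TT).coord 1 (c * a) := by
  classical
  suffices (LinearMap.mul A H).compr₂ ((tildeBasis cs TT).coord 1) =
      (LinearMap.mul A H).flip.compr₂ ((tildeBasis cs TT).coord 1) from
    LinearMap.congr_fun₂ this a c
  refine LinearMap.ext_basis (tildeBasis cs TT) (tildeBasis cs TT) fun x y => ?_
  simp only [LinearMap.compr₂_apply, LinearMap.mul_apply', LinearMap.flip_apply, tildeBasis_apply,
    hT.coord_one_Ttilde_mul_Ttilde, mul_eq_one_comm]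

theorem coord_eq_coord_one_mul_Ttilde_inv (v : W) (X : H) :
    (tildeBasis cs TT).coord v X = (tildeBasis cs TT).coord 1 (X * Ttilde cs TT v⁻¹) := by
  classical
  suffices (tildeBasis cs TT).coord v =
      (tildeBasis cs TT).coord 1 ∘ₗ LinearMap.mulRight A (Ttilde cs TT v⁻¹) from
    LinearMap.congr_fun this X
  refine (tildeBasis cs TT).ext fun x => ?_
  simp only [LinearMap.comp_apply, LinearMap.mulRight_apply, tildeBasis_apply,
    hT.coord_one_Ttilde_mul_Ttilde, coord_tildeBasis_Ttilde, Finsupp.single_apply, mul_inv_eq_one]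

theorem heckeF_eq_heckeF_inv_inv (w u v : W) :
    heckeF cs TT w u v = heckeF cs TT v⁻¹ w u⁻¹ := by
  rw [heckeF_eq_coord, heckeF_eq_coord, hT.coord_eq_coord_one_mul_Ttilde_inv v,
    hT.coord_eq_coord_one_mul_Ttilde_inv u⁻¹, inv_inv, hT.coord_one_mul_comm, mul_assoc]

theorem heckeF_xiDegree_le_length (w u v : W) :
    ∃ p : Polynomial ℤ, p.natDegree ≤ cs.length v ∧
      Polynomial.aeval ξ p = heckeF cs TT w u v := by
  simpa only [hT.heckeF_eq_heckeF_inv_inv w u v, cs.length_inv] using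
    hT.heckeF_xiDegree_le_length_left v⁻¹ w u⁻¹

theorem Ttilde_simple_mul_mem_span {P : Subgroup W} {b : B} (hb : cs.simple b ∈ P) {m : H}
    (hm : m ∈ Submodule.span A (tildeBasis cs TT '' P)) :
    Ttilde cs TT (cs.simple b) * m ∈ Submodule.span A (tildeBasis cs TT '' P) := by
  have hP {x : W} (hx : x ∈ P) : Ttilde cs TT x ∈ Submodule.span A (tildeBasis cs TT '' P) :=
    Submodule.subset_span ⟨x, hx, tildeBasis_apply cs TT x⟩
  induction hm using Submodule.span_induction with
  | mem _ hz =>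
    obtain ⟨x, hx, rfl⟩ := hz
    rw [tildeBasis_apply]
    by_cases hxb : cs.IsLeftDescent x b
    · rw [hT.Ttilde_simple_mul_of_isLeftDescent hxb]
      exact add_mem (hP (mul_mem hb hx)) (Submodule.smul_mem _ _ (hP hx))
    · rw [hT.Ttilde_simple_mul_of_not_isLeftDescent hxb]
      exact hP (mul_mem hb hx)
  | zero => simp
  | add _ _ _ _ h₁ h₂ => rw [mul_add]; exact add_mem h₁ h₂
  | smul a _ _ h => rw [mul_smul_comm]; exact Submodule.smul_mem _ a h

theorem Ttilde_mul_mem_span (I : Set B) {w : W} (hw : w ∈ Subgroup.closure (cs.simple '' I))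
    {m : H} (hm : m ∈ Submodule.span A (tildeBasis cs TT '' Subgroup.closure (cs.simple '' I))) :
    Ttilde cs TT w * m ∈
      Submodule.span A (tildeBasis cs TT '' Subgroup.closure (cs.simple '' I)) := by
  set V := Submodule.span A (tildeBasis cs TT '' Subgroup.closure (cs.simple '' I))
  have step (b : B) (hbI : b ∈ I) (y : W) (hy : ∀ m ∈ V, Ttilde cs TT y * m ∈ V) :
      ∀ m ∈ V, Ttilde cs TT (cs.simple b * y) * m ∈ V := by
    have hb : cs.simple b ∈ Subgroup.closure (cs.simple '' I) :=
      Subgroup.subset_closure ⟨b, hbI, rfl⟩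
    intro m hm
    by_cases hyb : cs.IsLeftDescent y b
    · rw [← sub_eq_of_eq_add (hT.Ttilde_simple_mul_of_isLeftDescent hyb), sub_mul,
        smul_mul_assoc, mul_assoc]
      exact sub_mem (hT.Ttilde_simple_mul_mem_span hb (hy m hm))
        (Submodule.smul_mem _ _ (hy m hm))
    · rw [← hT.Ttilde_simple_mul_of_not_isLeftDescent hyb, mul_assoc]
      exact hT.Ttilde_simple_mul_mem_span hb (hy m hm)
  induction hw using Subgroup.closure_induction_left generalizing m with
  | one => rwa [hT.Ttilde_one, one_mul]
  | mul_left x hx y _ ih =>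
    obtain ⟨b, hb, rfl⟩ := hx
    exact step b hb y (fun m hm => ih hm) m hm
  | inv_mul_cancel x hx y _ ih =>
    obtain ⟨b, hb, rfl⟩ := hx
    rw [cs.inv_simple]
    exact step b hb y (fun m hm => ih hm) m hm

theorem heckeF_eq_zero_of_notMem_closure (I : Set B) {w u v : W}
    (hw : w ∈ Subgroup.closure (cs.simple '' I)) (hu : u ∈ Subgroup.closure (cs.simple '' I))
    (hv : v ∉ Subgroup.closure (cs.simple '' I)) : heckeF cs TT w u v = 0 := by
  have hmem := hT.Ttilde_mul_mem_span I hw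
    (Submodule.subset_span ⟨u, hu, tildeBasis_apply cs TT u⟩)
  rw [heckeF_eq_coord, Module.Basis.coord_apply, ← Finsupp.notMem_support_iff]
  exact fun hsupp => hv ((tildeBasis cs TT).mem_span_image.mp hmem hsupp)

end IsHeckeBasis

end

theorem stmt_10_general {B W H : Type*} [Group W] [Ring H] [Algebra (LaurentPolynomial ℤ) H]
    {M : CoxeterMatrix B} (cs : CoxeterSystem M W)
    (TT : Module.Basis W (LaurentPolynomial ℤ) H) (hT : IsHeckeBasis cs TT)
    (i j : B)
    (w u : W) (hw : w ∈ Subgroup.closure {cs.simple i, cs.simple j})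
    (hu : u ∈ Subgroup.closure {cs.simple i, cs.simple j}) :
    (∀ v ∈ Subgroup.closure {cs.simple i, cs.simple j},
      ∃ p : Polynomial ℤ, p.natDegree ≤ cs.length v ∧
        Polynomial.aeval heckeXi p = heckeF cs TT w u v) ∧
    (∀ v : W, v ∉ Subgroup.closure {cs.simple i, cs.simple j} → heckeF cs TT w u v = 0) := by
  rw [← Set.image_pair] at hw hu ⊢
  exact ⟨fun v _ => hT.heckeF_xiDegree_le_length w u v,
    fun v hv => hT.heckeF_eq_zero_of_notMem_closure {i, j} hw hu hv⟩

/-- Let `P` be a finite standard parabolic subgroup of `W` generated by two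
simple reflections `s_i, s_j` (`i ≠ j`), and let `w, u ∈ P`.  Then for every `v ∈ P` the degree
of `f_{w,u,v}` as a polynomial in `ξ` is at most `l(v)`, and `f_{w,u,v} = 0` for `v ∉ P`. -/
theorem stmt_10 {B W H : Type*} [Group W] [Ring H] [Algebra (LaurentPolynomial ℤ) H]
    {M : CoxeterMatrix B} (cs : CoxeterSystem M W)
    (TT : Module.Basis W (LaurentPolynomial ℤ) H) (hT : IsHeckeBasis cs TT)
    (i j : B) (hij : i ≠ j)
    (hfin : (Subgroup.closure {cs.simple i, cs.simple j} : Set W).Finite)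
    (w u : W) (hw : w ∈ Subgroup.closure {cs.simple i, cs.simple j})
    (hu : u ∈ Subgroup.closure {cs.simple i, cs.simple j}) :
    (∀ v ∈ Subgroup.closure {cs.simple i, cs.simple j},
      ∃ p : Polynomial ℤ, p.natDegree ≤ cs.length v ∧
        Polynomial.aeval heckeXi p = heckeF cs TT w u v) ∧
    (∀ v : W, v ∉ Subgroup.closure {cs.simple i, cs.simple j} → heckeF cs TT w u v = 0) :=
  stmt_10_general cs TT hT i j w u hw hu
end
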